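/- arXiv:1612.04476 — 3 statements merged into one kernel-verified Lean document; each statement's English description precedes it below -/
import Mathlib

section
/- Let n ≥ 4, 1 < k < n−1, with n − k even, and let ρ = φτ where τ = (1 2 ... n) and φ reverses {1,...,k}. Then τρ^{n−k} equals the consecutive k-cycle (1 2 ... k). -/
/-!
In 0-indexed positions, `ρ` swaps `i ↔ k - 2 - i` for `i < k - 1` and cycles
`k - 1 → k → ⋯ → n - 1 → k - 1`, a cycle of length `n - k + 1`. As `n - k` is even,
`ρ ^ (n - k)` fixes the first `k - 1` positions and acts as `ρ⁻¹` on the cycle;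
following it by `τ` gives `0 → 1 → ⋯ → k - 1 → 0`.
-/

/-- The flip of the oval track puzzle: reverses the block of the first `k`
positions (0-indexed `0,…,k-1`, i.e. tiles `1,…,k`) and fixes the rest. -/
def otFlip (n k : ℕ) : Equiv.Perm (Fin n) :=
  Function.Involutive.toPerm
    (fun i => if h : i.val < k ∧ k ≤ n then ⟨k - 1 - i.val, by omega⟩ else i)
    (by
      intro i
      dsimp only
      by_cases h1 : i.val < k ∧ k ≤ n
      · rw [dif_pos h1]
        rw [dif_pos (show (⟨k - 1 - i.val, by omega⟩ : Fin n).val < k ∧ k ≤ n from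
          ⟨by simp; omega, h1.2⟩)]
        exact Fin.ext (by simp; omega)
      · rw [dif_neg h1, dif_neg h1])

/-- The cycle on `Fin n` given (0-indexed) by a list of natural numbers. -/
def otCycle (n : ℕ) (l : List ℕ) : Equiv.Perm (Fin n) :=
  (l.filterMap (fun a => if h : a < n then some ⟨a, h⟩ else none)).formPerm

/-- Type I: preserves the parity of every tile label. -/
def TypeI (n : ℕ) (σ : Equiv.Perm (Fin n)) : Prop :=
  ∀ i : Fin n, (σ i).val % 2 = i.val % 2

/-- Type II: reverses the parity of every tile label. -/
def TypeII (n : ℕ) (σ : Equiv.Perm (Fin n)) : Prop :=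
  ∀ i : Fin n, (σ i).val % 2 ≠ i.val % 2

open Equiv

lemma finRotate_apply_val {n : ℕ} (i : Fin n) :
    (finRotate n i).val = if i.val + 1 = n then 0 else i.val + 1 := by
  rcases n with _ | n
  · exact i.elim0
  rw [coe_finRotate]
  simp only [Fin.ext_iff, Fin.val_last, Nat.add_right_cancel_iff]

lemma otFlip_apply_val (n k : ℕ) (i : Fin n) :
    (otFlip n k i).val = if i.val < k ∧ k ≤ n then k - 1 - i.val else i.val := by
  change (if h : i.val < k ∧ k ≤ n then (⟨k - 1 - i.val, by omega⟩ : Fin n) else i).val = _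
  split <;> rfl

lemma otCycle_range_apply_val {n k : ℕ} (hkn : k ≤ n) (i : Fin n) :
    (otCycle n (List.range k) i).val = if i.val < k then (i.val + 1) % k else i.val := by
  set L := (List.range k).filterMap fun a => if h : a < n then some (⟨a, h⟩ : Fin n) else none
  have hL : L = (List.range k).pmap (fun a h => (⟨a, h⟩ : Fin n))
      fun a ha => (List.mem_range.mp ha).trans_le hkn := by
    induction k with
    | zero => rfl
    | succ k ih =>
      simp only [L, List.range_succ, List.filterMap_append, List.pmap_append]
      rw [ih (by omega)]
      simp [show k < n by omega]
  have hlen : L.length = k := by rw [hL, List.length_pmap, List.length_range]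
  have hget (j : ℕ) (hj : j < L.length) : (L[j]).val = j := by
    simp only [hL, List.getElem_pmap, List.getElem_range]
  have hnodup : L.Nodup := by
    rw [hL]
    exact List.nodup_range.pmap fun a _ b _ h => congrArg Fin.val h
  unfold otCycle
  split_ifs with hi
  · have hiL : i = L[i.val]'(by omega) := Fin.ext (hget _ _).symm
    rw [hiL, List.formPerm_apply_getElem L hnodup, hget, hget, hlen]
  · have hmem : i ∉ L := by
      rw [hL, List.mem_pmap]
      rintro ⟨a, ha, rfl⟩
      exact hi (List.mem_range.mp ha)
    rw [List.formPerm_apply_of_notMem hmem]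

/-- The flip-translation `ρ = φτ`. -/
def otRho (n k : ℕ) : Perm (Fin n) := otFlip n k * finRotate n

lemma otRho_apply_val {n k : ℕ} (hk : 0 < k) (hkn : k ≤ n) (i : Fin n) :
    (otRho n k i).val =
      if i.val + 1 = n then k - 1 else if i.val + 1 < k then k - 2 - i.val else i.val + 1 := by
  rw [otRho, Perm.mul_apply, otFlip_apply_val, finRotate_apply_val]
  split_ifs <;> omega

lemma otRho_pow_apply_of_lt_of_even {n k : ℕ} (hk : 0 < k) (hkn : k ≤ n) {i : Fin n}
    (hi : i.val + 1 < k) {m : ℕ} (hm : Even m) : (otRho n k ^ m) i = i := by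
  have hρρ : (otRho n k ^ 2) i = i := by
    have hρ : (otRho n k i).val = k - 2 - i.val := by
      rw [otRho_apply_val hk hkn, if_neg (by omega), if_pos hi]
    ext
    rw [sq, Perm.mul_apply, otRho_apply_val hk hkn, hρ, if_neg (by omega), if_pos (by omega)]
    omega
  obtain ⟨t, rfl⟩ := hm
  rw [← two_mul, pow_mul]
  exact Perm.pow_apply_eq_self_of_apply_eq_self hρρ t

lemma otRho_pow_apply_val_of_le {n k : ℕ} (hk : 0 < k) (hkn : k ≤ n) {i : Fin n}
    (hi : k - 1 ≤ i.val) {j : ℕ} (hj : i.val + j < n) : ((otRho n k ^ j) i).val = i.val + j := by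
  induction j with
  | zero => rfl
  | succ j ih =>
    rw [pow_succ', Perm.mul_apply, otRho_apply_val hk hkn, ih (by omega)]
    split_ifs <;> omega

lemma otRho_pow_sub_apply_val {n k : ℕ} (hk : 0 < k) (hkn : k ≤ n) (hnk : Even (n - k))
    (i : Fin n) :
    ((otRho n k ^ (n - k)) i).val =
      if i.val + 1 < k then i.val else if i.val + 1 = k then n - 1 else i.val - 1 := by
  split_ifs with hlt heq
  · rw [otRho_pow_apply_of_lt_of_even hk hkn hlt hnk]
  · rw [otRho_pow_apply_val_of_le hk hkn (by omega) (by omega)]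
    omega
  · -- walk from `i` up to `n - 1`, wrap around to `k - 1`, then walk up to `i - 1`
    have hwrap : (otRho n k ((otRho n k ^ (n - 1 - i.val)) i)).val = k - 1 := by
      rw [otRho_apply_val hk hkn, otRho_pow_apply_val_of_le hk hkn (by omega) (by omega),
        if_pos (by omega)]
    rw [show n - k = (i.val - k) + 1 + (n - 1 - i.val) by omega, pow_add, pow_succ,
      Perm.mul_apply, Perm.mul_apply, otRho_pow_apply_val_of_le hk hkn hwrap.ge (by omega), hwrap]
    omega

theorem stmt11_general (n k : ℕ) (hk1 : 1 < k) (hk2 : k < n - 1)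
    (hnk : Even (n - k)) :
    finRotate n * (otFlip n k * finRotate n) ^ (n - k) = otCycle n (List.range k) := by
  have hk : 0 < k := by omega
  have hkn : k ≤ n := by omega
  change finRotate n * otRho n k ^ (n - k) = _
  ext i
  rw [Perm.mul_apply, finRotate_apply_val, otRho_pow_sub_apply_val hk hkn hnk,
    otCycle_range_apply_val hkn]
  split_ifs <;> first
    | omega
    | rw [Nat.mod_eq_of_lt (by omega)]
    | rw [show i.val + 1 = k by omega, Nat.mod_self]

theorem stmt11 (n k : ℕ) (hn : 4 ≤ n) (hk1 : 1 < k) (hk2 : k < n - 1)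
    (hnk : Even (n - k)) :
    finRotate n * (otFlip n k * finRotate n) ^ (n - k) = otCycle n (List.range k) :=
  stmt11_general n k hk1 hk2 hnk
end

section
/- Let n ≥ 4, 1 < k < n−1 with n − k even, π = τφτ⁻¹φ, and ρ = φτ. Then π⁻¹(τρ^{n−k})² is the 3-cycle (k−1 k k+1). -/
/-!
Positions are 0-indexed, so the claimed 3-cycle is `(k-2 k-1 k)`. The permutation `ρ = φτ` is an
involution on the positions `0, …, k-2` and a single `(n-k+1)`-cycle `k-1 → k → ⋯ → n-1 → k-1` on
the others. Hence for `n - k` even, `τρ^(n-k)` fixes the tail and acts as the `k`-cycle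
`(0 1 ⋯ k-1) = Fin.cycleRange (k-1)`, while `π = τφτ⁻¹φ` is the square of the `(k+1)`-cycle
`Fin.cycleRange k`. The quotient of the squares of these two consecutive cycles is `(k-2 k-1 k)`.
-/

open Equiv

theorem val_otFlip {n k : ℕ} (hk : k ≤ n) (i : Fin n) :
    (otFlip n k i).val = if i.val < k then k - 1 - i.val else i.val := by
  change (if h : i.val < k ∧ k ≤ n then (⟨k - 1 - i.val, by omega⟩ : Fin n) else i).val = _
  by_cases h : i.val < k
  · rw [dif_pos ⟨h, hk⟩, if_pos h]
  · rw [dif_neg (by tauto), if_neg h]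

theorem val_finRotate {n : ℕ} (i : Fin n) :
    (finRotate n i).val = if i.val = n - 1 then 0 else i.val + 1 := by
  obtain ⟨m, rfl⟩ := Nat.exists_eq_succ_of_ne_zero i.pos.ne'
  rw [coe_finRotate]
  simp only [Fin.ext_iff, Fin.val_last, Nat.succ_sub_one]

theorem val_finRotate_inv {n : ℕ} (i : Fin n) :
    ((finRotate n)⁻¹ i).val = if i.val = 0 then n - 1 else i.val - 1 := by
  have h := val_finRotate ((finRotate n)⁻¹ i)
  rw [← Perm.mul_apply, mul_inv_cancel, Perm.one_apply] at h
  have := ((finRotate n)⁻¹ i).isLt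
  split_ifs at h ⊢ <;> omega

theorem Fin.val_cycleRange {n : ℕ} (i j : Fin n) :
    (Fin.cycleRange i j).val =
      if j.val < i.val then j.val + 1 else if j.val = i.val then 0 else j.val := by
  rcases lt_trichotomy j i with h | rfl | h
  · rw [Fin.coe_cycleRange_of_lt h, if_pos (show j.val < i.val from h)]
  · rw [Fin.coe_cycleRange_of_le le_rfl]; simp
  · rw [Fin.cycleRange_of_gt h, if_neg (show ¬ j.val < i.val by omega),
      if_neg (show j.val ≠ i.val by omega)]

section Rho

variable {n k : ℕ}

theorem val_otFlip_mul_finRotate (hk : k ≤ n) (i : Fin n) :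
    ((otFlip n k * finRotate n) i).val =
      if i.val = n - 1 then k - 1 else if i.val + 1 < k then k - 2 - i.val else i.val + 1 := by
  rw [Perm.mul_apply, val_otFlip hk, val_finRotate]
  split_ifs <;> omega

theorem otFlip_mul_finRotate_sq_apply_of_lt (hk : k ≤ n) {i : Fin n} (hi : i.val + 1 < k) :
    ((otFlip n k * finRotate n) ^ 2) i = i := by
  apply Fin.ext
  rw [pow_two, Perm.mul_apply, val_otFlip_mul_finRotate hk, val_otFlip_mul_finRotate hk]
  split_ifs <;> omega

theorem val_otFlip_mul_finRotate_pow_of_le (hk0 : 0 < k) (hk : k ≤ n) {i : Fin n}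
    (hi : k - 1 ≤ i.val) {j : ℕ} (hj : j ≤ n - k + 1) :
    (((otFlip n k * finRotate n) ^ j) i).val =
      if i.val + j ≤ n - 1 then i.val + j else i.val + j - (n - k + 1) := by
  have := i.isLt
  induction j with
  | zero => simp only [add_zero, pow_zero, Perm.one_apply]; split_ifs <;> omega
  | succ j ih =>
    rw [pow_succ', Perm.mul_apply, val_otFlip_mul_finRotate hk, ih (by omega)]
    split_ifs <;> omega

theorem finRotate_mul_otFlip_mul_finRotate_pow_eq_cycleRange (hk0 : 0 < k) (hk : k ≤ n)
    (hnk : Even (n - k)) :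
    finRotate n * (otFlip n k * finRotate n) ^ (n - k) = Fin.cycleRange ⟨k - 1, by omega⟩ := by
  ext i
  rw [Perm.mul_apply, val_finRotate, Fin.val_cycleRange]
  dsimp only
  by_cases hi : i.val + 1 < k
  · obtain ⟨c, hc⟩ := hnk
    rw [hc, ← two_mul, pow_mul,
      Perm.pow_apply_eq_self_of_apply_eq_self (otFlip_mul_finRotate_sq_apply_of_lt hk hi)]
    split_ifs <;> omega
  · rw [val_otFlip_mul_finRotate_pow_of_le hk0 hk (by omega) (by omega)]
    have := i.isLt
    split_ifs <;> omega

end Rho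

theorem finRotate_mul_otFlip_mul_finRotate_inv_mul_otFlip {n k : ℕ} (hk : k < n) :
    finRotate n * otFlip n k * (finRotate n)⁻¹ * otFlip n k = Fin.cycleRange ⟨k, hk⟩ ^ 2 := by
  ext i
  simp only [pow_two, Perm.mul_apply, val_otFlip hk.le, val_finRotate, val_finRotate_inv,
    Fin.val_cycleRange]
  have := i.isLt
  split_ifs <;> omega

theorem val_otCycle_three {n a b c : ℕ} (ha : a < n) (hb : b < n) (hc : c < n) (hab : a ≠ b)
    (hbc : b ≠ c) (hac : a ≠ c) (i : Fin n) :
    (otCycle n [a, b, c] i).val =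
      if i.val = a then b else if i.val = b then c else if i.val = c then a else i.val := by
  simp only [otCycle, List.filterMap_cons, List.filterMap_nil, dif_pos ha, dif_pos hb, dif_pos hc,
    List.formPerm_cons_cons, List.formPerm_singleton, mul_one, Perm.mul_apply, swap_apply_def,
    Fin.ext_iff, apply_ite Fin.val]
  split_ifs <;> omega

theorem cycleRange_sq_mul_otCycle {n k : ℕ} (hk : 2 ≤ k) (hkn : k < n) :
    Fin.cycleRange ⟨k, hkn⟩ ^ 2 * otCycle n [k - 2, k - 1, k] =
      Fin.cycleRange ⟨k - 1, by omega⟩ ^ 2 := by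
  have hcycle := val_otCycle_three (a := k - 2) (b := k - 1) (by omega) (by omega) hkn
    (by omega) (by omega) (by omega)
  ext i
  simp only [pow_two, Perm.mul_apply, Fin.val_cycleRange, hcycle]
  split_ifs <;> omega

theorem stmt13_general (n k : ℕ) (hk1 : 1 < k) (hk2 : k < n - 1)
    (hnk : Even (n - k)) :
    (finRotate n * otFlip n k * (finRotate n)⁻¹ * otFlip n k)⁻¹ *
        (finRotate n * (otFlip n k * finRotate n) ^ (n - k)) ^ 2 =
      otCycle n [k - 2, k - 1, k] := by
  rw [finRotate_mul_otFlip_mul_finRotate_inv_mul_otFlip (by omega),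
    finRotate_mul_otFlip_mul_finRotate_pow_eq_cycleRange (by omega) (by omega) hnk,
    inv_mul_eq_iff_eq_mul, cycleRange_sq_mul_otCycle hk1 (by omega)]

theorem stmt13 (n k : ℕ) (hn : 4 ≤ n) (hk1 : 1 < k) (hk2 : k < n - 1)
    (hnk : Even (n - k)) :
    (finRotate n * otFlip n k * (finRotate n)⁻¹ * otFlip n k)⁻¹ *
        (finRotate n * (otFlip n k * finRotate n) ^ (n - k)) ^ 2 =
      otCycle n [k - 2, k - 1, k] :=
  stmt13_general n k hk1 hk2 hnk
end

section
/- Let n ≥ 4 be even and 1 < k < n−1 be odd. Then the 3-cycle (1 3 5) lies in the subgroup OT_{n,k} of S_n generated by τ = (1 2 ... n) and the flip φ reversing {1,...,k}. -/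
/-!
The commutator of `τ` with its conjugate `φ τ φ` is the 3-cycle `(0, k+1, k-1)`. Shifting its
inverse by a power of `τ` gives `(0, 2, n-k+1)`, whose points are all even since `n` is even and
`k` odd. Conjugating the inverse of `(0, 2, J+2)` by its `τ²`-shift `(2, 4, J+4)` gives
`(J+2, 4, 0)`; multiplying by `(0, 2, J+2)` gives `(2, J+2, 4)`, and shifting back by `τ⁻²`
gives `(0, J, 2)`, the inverse of `(0, 2, J)`. So one descends to `(0, 2, 4)`; for `k = 3` the
inverse `(2, 4, 0)` is already the target.
-/

open Equiv

namespace List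
variable {α : Type*} [DecidableEq α]

theorem formPerm_map_perm (σ : Equiv.Perm α) (l : List α) :
    formPerm (l.map σ) = σ * formPerm l * σ⁻¹ := by
  induction l with
  | nil => simp
  | cons a l ih =>
    cases l with
    | nil => simp
    | cons b l =>
      rw [map_cons, map_cons, formPerm_cons_cons, ← map_cons, ih, formPerm_cons_cons,
        swap_apply_apply]
      group

theorem formPerm_three_apply {a b c : α} (hab : a ≠ b) (hbc : b ≠ c) (hac : a ≠ c) (x : α) :
    formPerm [a, b, c] x = if x = a then b else if x = b then c else if x = c then a else x := by
  simp only [formPerm_cons_cons, formPerm_singleton, mul_one, Equiv.Perm.mul_apply, swap_apply_def]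
  grind

theorem formPerm_three_mul_formPerm_three {a b c d : α} (hab : a ≠ b) (hac : a ≠ c)
    (had : a ≠ d) :
    formPerm [a, b, c] * formPerm [c, d, a] = formPerm [b, c, d] := by
  ext x
  simp only [formPerm_cons_cons, formPerm_singleton, mul_one, Equiv.Perm.mul_apply, swap_apply_def]
  grind

end List

theorem val_finRotate_pow {n : ℕ} (s : ℕ) (i : Fin n) :
    ((finRotate n ^ s) i).val = (i.val + s) % n := by
  induction s with
  | zero => simp [Nat.mod_eq_of_lt i.isLt]
  | succ s ih =>
    have := i.neZero
    rw [pow_succ', Equiv.Perm.mul_apply, finRotate_apply, Fin.val_add, ih, Fin.val_one',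
      Nat.mod_add_mod, Nat.add_mod_mod, add_assoc]

theorem finRotate_pow_apply_mk {n : ℕ} (s : ℕ) {a a' : ℕ} (ha : a < n) (ha' : a' < n)
    (h : a + s = a' ∨ a + s = a' + n) : (finRotate n ^ s) ⟨a, ha⟩ = ⟨a', ha'⟩ := by
  ext
  rw [val_finRotate_pow]
  rcases h with h | h <;> simp [h, Nat.mod_eq_of_lt ha']

theorem finRotate_val_cases {n : ℕ} (x : Fin n) :
    (x.val + 1 = n ∧ (finRotate n x).val = 0) ∨
      (x.val + 1 < n ∧ (finRotate n x).val = x.val + 1) := by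
  have h := val_finRotate_pow 1 x
  rw [pow_one] at h
  rcases (Nat.succ_le_of_lt x.isLt).eq_or_lt with hx | hx
  · exact Or.inl ⟨hx, by simp_all⟩
  · exact Or.inr ⟨hx, by simp_all [Nat.mod_eq_of_lt]⟩

theorem finRotate_inv_val_cases {n : ℕ} (x : Fin n) :
    (x.val = 0 ∧ ((finRotate n)⁻¹ x).val = n - 1) ∨
      (0 < x.val ∧ ((finRotate n)⁻¹ x).val = x.val - 1) := by
  have h := finRotate_val_cases ((finRotate n)⁻¹ x)
  rw [← Perm.mul_apply, mul_inv_cancel, Perm.one_apply] at h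
  omega

theorem otFlip_inv (n k : ℕ) : (otFlip n k)⁻¹ = otFlip n k :=
  Function.Involutive.toPerm_symm _

theorem otFlip_val_cases {n k : ℕ} (hk : k ≤ n) (x : Fin n) :
    (x.val < k ∧ (otFlip n k x).val = k - 1 - x.val) ∨
      (k ≤ x.val ∧ (otFlip n k x).val = x.val) := by
  have e : otFlip n k x = if h : x.val < k ∧ k ≤ n then ⟨k - 1 - x.val, by omega⟩ else x := rfl
  rw [e]
  split_ifs with h
  · exact Or.inl ⟨h.1, rfl⟩
  · exact Or.inr ⟨by omega, rfl⟩

section Positions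

variable {n : ℕ}

theorem otCycle_three_eq_formPerm {a b c : ℕ} (ha : a < n) (hb : b < n) (hc : c < n) :
    otCycle n [a, b, c] = List.formPerm [⟨a, ha⟩, ⟨b, hb⟩, ⟨c, hc⟩] := by
  simp [otCycle, ha, hb, hc]

theorem otCycle_reverse (l : List ℕ) : otCycle n l.reverse = (otCycle n l)⁻¹ := by
  simp [otCycle, List.formPerm_reverse]

variable {H : Subgroup (Perm (Fin n))} {a b c d e f p q : ℕ}

theorem otCycle_reverse_mem (h : otCycle n [a, b, c] ∈ H) : otCycle n [c, b, a] ∈ H := by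
  simpa [← otCycle_reverse] using H.inv_mem h

theorem otCycle_rotate_mem (h : otCycle n [a, b, c] ∈ H)
    (hlt : a < n ∧ b < n ∧ c < n := by omega) (hne : a ≠ b ∧ b ≠ c ∧ a ≠ c := by omega) :
    otCycle n [c, a, b] ∈ H := by
  obtain ⟨ha, hb, hc⟩ := hlt
  have hnd : [(⟨a, ha⟩ : Fin n), ⟨b, hb⟩, ⟨c, hc⟩].Nodup := by simp [Fin.ext_iff]; omega
  rw [otCycle_three_eq_formPerm ha hb hc, ← List.formPerm_rotate _ hnd 2] at h
  rwa [otCycle_three_eq_formPerm hc ha hb]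

theorem otCycle_shift_mem (hτ : finRotate n ∈ H) (s : ℕ) {a' b' c' : ℕ}
    (h : otCycle n [a, b, c] ∈ H)
    (hlt : a < n ∧ b < n ∧ c < n ∧ a' < n ∧ b' < n ∧ c' < n := by omega)
    (hs : (a + s = a' ∨ a + s = a' + n) ∧ (b + s = b' ∨ b + s = b' + n) ∧
      (c + s = c' ∨ c + s = c' + n) := by omega) :
    otCycle n [a', b', c'] ∈ H := by
  obtain ⟨ha, hb, hc, ha', hb', hc'⟩ := hlt
  obtain ⟨hsa, hsb, hsc⟩ := hs
  rw [otCycle_three_eq_formPerm ha hb hc] at h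
  rw [otCycle_three_eq_formPerm ha' hb' hc', ← finRotate_pow_apply_mk s ha ha' hsa,
    ← finRotate_pow_apply_mk s hb hb' hsb, ← finRotate_pow_apply_mk s hc hc' hsc]
  have := H.mul_mem (H.mul_mem (H.pow_mem hτ s) h) (H.inv_mem (H.pow_mem hτ s))
  rwa [← List.formPerm_map_perm] at this

theorem otCycle_conj_mem (hσ : otCycle n [d, e, f] ∈ H) (h : otCycle n [p, d, q] ∈ H)
    (hlt : p < n ∧ q < n ∧ d < n ∧ e < n ∧ f < n := by omega)
    (hne : d ≠ e ∧ e ≠ f ∧ d ≠ f ∧ p ≠ d ∧ p ≠ e ∧ p ≠ f ∧ q ≠ d ∧ q ≠ e ∧ q ≠ f := by omega) :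
    otCycle n [p, e, q] ∈ H := by
  obtain ⟨hp, hq, hd, he, hf⟩ := hlt
  obtain ⟨hde, hef, hdf, hpd, hpe, hpf, hqd, hqe, hqf⟩ := hne
  rw [otCycle_three_eq_formPerm hd he hf] at hσ
  rw [otCycle_three_eq_formPerm hp hd hq] at h
  have := H.mul_mem (H.mul_mem hσ h) (H.inv_mem hσ)
  rw [← List.formPerm_map_perm] at this
  rw [otCycle_three_eq_formPerm hp he hq]
  simpa [swap_apply_def, hde, hef, hdf, hpd, hpe, hpf, hqd, hqe, hqf, hde.symm] using this

theorem otCycle_mul_mem (h₁ : otCycle n [a, b, c] ∈ H) (h₂ : otCycle n [c, d, a] ∈ H)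
    (hlt : a < n ∧ b < n ∧ c < n ∧ d < n := by omega) (hne : a ≠ b ∧ a ≠ c ∧ a ≠ d := by omega) :
    otCycle n [b, c, d] ∈ H := by
  obtain ⟨ha, hb, hc, hd⟩ := hlt
  obtain ⟨hab, hac, had⟩ := hne
  rw [otCycle_three_eq_formPerm ha hb hc] at h₁
  rw [otCycle_three_eq_formPerm hc hd ha] at h₂
  rw [otCycle_three_eq_formPerm hb hc hd, ← List.formPerm_three_mul_formPerm_three]
  · exact H.mul_mem h₁ h₂
  all_goals simpa [Fin.ext_iff]

end Positions

open scoped commutatorElement in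
theorem commutatorElement_finRotate_otFlip {n k : ℕ} (hk : 1 < k) (hkn : k + 1 < n) :
    ⁅finRotate n, otFlip n k * finRotate n * otFlip n k⁆ = otCycle n [0, k + 1, k - 1] := by
  ext x
  rw [otCycle_three_eq_formPerm (by omega) (by omega) (by omega),
    List.formPerm_three_apply (by simp) (by simp; omega) (by simp; omega)]
  simp only [commutatorElement_def, mul_inv_rev, otFlip_inv, mul_assoc, Perm.mul_apply]
  have hk' : k ≤ n := by omega
  have h₁ := otFlip_val_cases hk' x
  generalize otFlip n k x = y₁ at h₁ ⊢
  have h₂ := finRotate_inv_val_cases y₁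
  generalize (finRotate n)⁻¹ y₁ = y₂ at h₂ ⊢
  have h₃ := otFlip_val_cases hk' y₂
  generalize otFlip n k y₂ = y₃ at h₃ ⊢
  have h₄ := finRotate_inv_val_cases y₃
  generalize (finRotate n)⁻¹ y₃ = y₄ at h₄ ⊢
  have h₅ := otFlip_val_cases hk' y₄
  generalize otFlip n k y₄ = y₅ at h₅ ⊢
  have h₆ := finRotate_val_cases y₅
  generalize finRotate n y₅ = y₆ at h₆ ⊢
  have h₇ := otFlip_val_cases hk' y₆
  generalize otFlip n k y₆ = y₇ at h₇ ⊢
  have h₈ := finRotate_val_cases y₇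
  generalize finRotate n y₇ = y₈ at h₈ ⊢
  split_ifs <;> simp only [Fin.ext_iff] at * <;> omega

section Descent

variable {n : ℕ} {H : Subgroup (Perm (Fin n))}

theorem otCycle_zero_two_mem_of_add_two (hτ : finRotate n ∈ H) {J : ℕ} (hJ : 4 ≤ J)
    (hJn : J + 4 < n) (hθ : otCycle n [0, 2, J + 2] ∈ H) : otCycle n [0, 2, J] ∈ H := by
  have hθ₁ : otCycle n [2, 4, J + 4] ∈ H := otCycle_shift_mem hτ 2 hθ
  have hz : otCycle n [J + 2, 4, 0] ∈ H := otCycle_conj_mem hθ₁ (otCycle_reverse_mem hθ)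
  have hθz : otCycle n [2, J + 2, 4] ∈ H := otCycle_mul_mem hθ hz
  have hback : otCycle n [0, J, 2] ∈ H := otCycle_shift_mem hτ (n - 2) hθz
  exact otCycle_rotate_mem (otCycle_reverse_mem hback)

theorem otCycle_zero_two_four_mem (hτ : finRotate n ∈ H) (i : ℕ) (hi : 2 * i + 6 < n)
    (h : otCycle n [0, 2, 2 * i + 4] ∈ H) : otCycle n [0, 2, 4] ∈ H := by
  induction i with
  | zero => exact h
  | succ i ih => exact ih (by omega) (otCycle_zero_two_mem_of_add_two hτ (by omega) (by omega) h)

end Descent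

theorem stmt16_general (n k : ℕ) (hne : Even n) (hk1 : 1 < k)
    (hk2 : k < n - 1) (hko : Odd k) :
    otCycle n [0, 2, 4] ∈ Subgroup.closure {finRotate n, otFlip n k} := by
  set H := Subgroup.closure {finRotate n, otFlip n k}
  have hτ : finRotate n ∈ H := Subgroup.subset_closure (Set.mem_insert _ _)
  have hφ : otFlip n k ∈ H := Subgroup.subset_closure (Set.mem_insert_of_mem _ rfl)
  have hν : otCycle n [0, k + 1, k - 1] ∈ H := by
    have hA : otFlip n k * finRotate n * otFlip n k ∈ H := H.mul_mem (H.mul_mem hφ hτ) hφ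
    rw [← commutatorElement_finRotate_otFlip hk1 (by omega), commutatorElement_def]
    exact H.mul_mem (H.mul_mem (H.mul_mem hτ hA) (H.inv_mem hτ)) (H.inv_mem hA)
  have hx : otCycle n [k - 1, k + 1, 0] ∈ H := otCycle_reverse_mem hν
  obtain ⟨i, rfl⟩ : ∃ i, n = k + 2 * i + 3 := by
    obtain ⟨m, rfl⟩ := hne
    obtain ⟨j, rfl⟩ := hko
    exact ⟨m - j - 2, by omega⟩
  obtain rfl | hk3 : k = 3 ∨ 3 < k := by
    obtain ⟨j, rfl⟩ := hko
    omega
  · exact otCycle_rotate_mem hx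
  · exact otCycle_zero_two_four_mem hτ i (by omega) (otCycle_shift_mem hτ (2 * i + 4) hx)

theorem stmt16 (n k : ℕ) (hn : 4 ≤ n) (hne : Even n) (hk1 : 1 < k)
    (hk2 : k < n - 1) (hko : Odd k) :
    otCycle n [0, 2, 4] ∈ Subgroup.closure {finRotate n, otFlip n k} :=
  stmt16_general n k hne hk1 hk2 hko
end
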